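/- Let k be a field, H a commutative Hopf algebra over k, A a right H-comodule algebra with structure map ρ : A → A ⊗_k H, and B := A^{coH}. Suppose that A admits a total integral φ : H → A and that the canonical map can : A ⊗_B A → A ⊗_k H, a ⊗ a' ↦ (a ⊗ 1)·ρ(a') = Σ a·a'₍₀₎ ⊗ a'₍₁₎, is surjective. Then for every (A,H)-Hopf module N, the evaluation map N^{coH} ⊗_B A → N, n ⊗ a ↦ n·a, is an isomorphism. -/

import Mathlib

open TensorProduct

/-- The coinvariant subalgebra `B = A^{coH} = {a ∈ A : ρ a = a ⊗ 1}` of a right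
`H`-comodule algebra `A`. -/
def coinvariants (k H A : Type*) [Field k] [CommRing H] [HopfAlgebra k H]
    [CommRing A] [Algebra k A] (ρ : A →ₐ[k] A ⊗[k] H) : Subalgebra k A where
  carrier := {a | ρ a = a ⊗ₜ[k] 1}
  mul_mem' := by
    intro a b ha hb
    simp only [Set.mem_setOf_eq] at *
    rw [map_mul, ha, hb, Algebra.TensorProduct.tmul_mul_tmul, mul_one]
  one_mem' := by
    simp only [Set.mem_setOf_eq, map_one, Algebra.TensorProduct.one_def]
  add_mem' := by
    intro a b ha hb
    simp only [Set.mem_setOf_eq] at *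
    rw [map_add, ha, hb, TensorProduct.add_tmul]
  algebraMap_mem' := fun c => by
    simp only [Set.mem_setOf_eq, AlgHom.commutes, Algebra.TensorProduct.algebraMap_apply]

/-- `ρ`, viewed as a `B`-algebra homomorphism `A → A ⊗ H`, where `B = A^{coH}` and `A ⊗ H`
is a `B`-algebra via the left tensor factor. -/
noncomputable def rhoCoinv (k H A : Type*) [Field k] [CommRing H] [HopfAlgebra k H]
    [CommRing A] [Algebra k A] (ρ : A →ₐ[k] A ⊗[k] H) :
    A →ₐ[↥(coinvariants k H A ρ)] (A ⊗[k] H) where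
  toRingHom := ρ.toRingHom
  commutes' := fun b => by
    have hb : ρ (b : A) = (b : A) ⊗ₜ[k] 1 := b.2
    have : algebraMap ↥(coinvariants k H A ρ) (A ⊗[k] H) b
        = algebraMap A (A ⊗[k] H) (b : A) := rfl
    rw [this, Algebra.TensorProduct.algebraMap_apply]
    exact hb

/-- The canonical map `can : A ⊗_B A → A ⊗ H`, `a ⊗ a' ↦ (a ⊗ 1) · ρ(a')`,
where `B = A^{coH}`. -/
noncomputable def canonicalMap (k H A : Type*) [Field k] [CommRing H] [HopfAlgebra k H]
    [CommRing A] [Algebra k A] (ρ : A →ₐ[k] A ⊗[k] H) :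
    A ⊗[↥(coinvariants k H A ρ)] A →ₐ[↥(coinvariants k H A ρ)] (A ⊗[k] H) :=
  Algebra.TensorProduct.productMap
    ((Algebra.ofId A (A ⊗[k] H)).restrictScalars ↥(coinvariants k H A ρ))
    (rhoCoinv k H A ρ)

/-- The action map `A ⊗ N → N`, `a ⊗ n ↦ a • n`, for an `A`-module `N`. -/
noncomputable def actionMap (k A N : Type*) [Field k] [CommRing A] [Algebra k A]
    [AddCommGroup N] [Module k N] [Module A N] [IsScalarTower k A N] :
    A ⊗[k] N →ₗ[k] N :=
  TensorProduct.lift (LinearMap.mk₂ k (fun a n => a • n)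
    (fun a a' n => add_smul a a' n)
    (fun c a n => smul_assoc c a n)
    (fun a n n' => smul_add a n n')
    (fun c a n => (smul_comm c a n).symm))

/-- The right `A`-module structure on `N ⊗ H`:
`(n ⊗ h) ⋆ (a ⊗ h') = (a • n) ⊗ (h * h')`, so that `w ⋆ ρ(a)` is the action
`(n ⊗ h)·a = Σ n·a₍₀₎ ⊗ h·a₍₁₎` of `a ∈ A` on `n ⊗ h ∈ N ⊗ H`. -/
noncomputable def hopfSMul (k H A N : Type*) [Field k] [CommRing H] [HopfAlgebra k H]
    [CommRing A] [Algebra k A]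
    [AddCommGroup N] [Module k N] [Module A N] [IsScalarTower k A N]
    (z : A ⊗[k] H) (w : N ⊗[k] H) : N ⊗[k] H :=
  (TensorProduct.map (actionMap k A N) (LinearMap.mul' k H))
    ((TensorProduct.tensorTensorTensorComm k A H N H) (z ⊗ₜ w))

/-- The coinvariants `N^{coH} = {n ∈ N : ρ_N(n) = n ⊗ 1}` of an `(A,H)`-Hopf module `N`,
as a `B`-submodule of `N`, where `B = A^{coH}`. -/
def hopfCoinvariants (k H A N : Type*) [Field k] [CommRing H] [HopfAlgebra k H]
    [CommRing A] [Algebra k A]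
    [AddCommGroup N] [Module k N] [Module A N] [IsScalarTower k A N]
    (ρ : A →ₐ[k] A ⊗[k] H) (ρN : N →ₗ[k] N ⊗[k] H)
    (hcompat : ∀ (a : A) (n : N), ρN (a • n) = hopfSMul k H A N (ρ a) (ρN n)) :
    Submodule ↥(coinvariants k H A ρ) N where
  carrier := {n | ρN n = n ⊗ₜ[k] 1}
  add_mem' := by
    intro x y hx hy
    simp only [Set.mem_setOf_eq] at *
    rw [map_add, hx, hy, TensorProduct.add_tmul]
  zero_mem' := by
    simp only [Set.mem_setOf_eq, map_zero, TensorProduct.zero_tmul]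
  smul_mem' := by
    intro b n hn
    simp only [Set.mem_setOf_eq] at *
    have hb : ρ (b : A) = (b : A) ⊗ₜ[k] 1 := b.2
    have hbn : (b • n : N) = (b : A) • n := rfl
    rw [hbn, hcompat, hn, hb]
    simp [hopfSMul, actionMap]

/-!
The inverse of the evaluation map is built from `P n = Σ φ(S n₁) • n₀`. Colinearity of `φ`
and the identity `Σ (S h₂)₁ ⊗ h₁ (S h₂)₂ = S h ⊗ 1`, a convolution computation in
`Hom(H, H ⊗ H)`, show that `P n` is coinvariant, and `P` is `B`-linear. Surjectivity of `can`
gives a `k`-linear `s : H → A ⊗_B A` with `can (s h) = 1 ⊗ h`; writing `s (S n₁) = Σ xᵢ ⊗ yᵢ`,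
the inverse sends `n` to `Σ P(yᵢ • n₀) ⊗ xᵢ`, which is well defined because `P` is `B`-linear.
Evaluating `Σ P(yᵢ • n₀) ⊗ xᵢ` gives `Σ φ(S(n₁ S n₂)) • n₀ = n`. On `a • m` with `m`
coinvariant the inverse gives `m ⊗ a'`, where `a'` is the evaluation of the inverse for the Hopf
module `A` at `a`, so `a' = a` by the previous computation.
-/

open TensorProduct LinearMap Coalgebra HopfAlgebra WithConv

namespace HopfAlgebra

variable {k H : Type*} [CommSemiring k] [Semiring H] [HopfAlgebra k H]

lemma antipode_tmul_one_convMul_comul :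
    toConv ((TensorProduct.mk k H H).flip 1 ∘ₗ antipode k) * toConv (comul (R := k) (A := H)) =
      toConv (TensorProduct.mk k H H 1) := by
  have hmul : mul' k (H ⊗[k] H) ∘ₗ map ((TensorProduct.mk k H H).flip 1 ∘ₗ antipode k) id ∘ₗ
      (TensorProduct.assoc k H H H).toLinearMap =
      rTensor H (mul' k H ∘ₗ rTensor H (antipode k)) := by
    ext a b c; simp
  apply WithConv.ext
  calc mul' k (H ⊗[k] H) ∘ₗ map ((TensorProduct.mk k H H).flip 1 ∘ₗ antipode k) comul ∘ₗ comul
      = mul' k (H ⊗[k] H) ∘ₗ map ((TensorProduct.mk k H H).flip 1 ∘ₗ antipode k) id ∘ₗ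
          lTensor H comul ∘ₗ comul := by
        rw [← LinearMap.comp_assoc comul (lTensor H comul), map_comp_lTensor, LinearMap.id_comp]
    _ = rTensor H (mul' k H ∘ₗ rTensor H (antipode k)) ∘ₗ rTensor H comul ∘ₗ comul := by
        rw [← hmul, ← Coalgebra.coassoc]; simp only [LinearMap.comp_assoc]
    _ = TensorProduct.mk k H H 1 := by
        rw [← LinearMap.comp_assoc, ← rTensor_comp, LinearMap.comp_assoc,
          mul_antipode_rTensor_comul, rTensor_comp, LinearMap.comp_assoc,
          Coalgebra.rTensor_counit_comp_comul]
        ext; simp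

lemma one_tmul_convMul_comul_antipode :
    toConv (TensorProduct.mk k H H 1) * toConv (comul ∘ₗ antipode k) =
      toConv ((TensorProduct.mk k H H).flip 1 ∘ₗ antipode k) := by
  rw [← antipode_tmul_one_convMul_comul, mul_assoc, LinearMap.comul_right_inv, mul_one]

end HopfAlgebra

section HopfModule

variable {k H A N : Type*} [Field k] [CommRing H] [HopfAlgebra k H]
  [CommRing A] [Algebra k A] [AddCommGroup N] [Module k N] [Module A N] [IsScalarTower k A N]

@[simp] lemma actionMap_tmul (a : A) (n : N) : actionMap k A N (a ⊗ₜ n) = a • n := rfl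

@[simp] lemma hopfSMul_tmul_tmul (a : A) (h : H) (n : N) (g : H) :
    hopfSMul k H A N (a ⊗ₜ h) (n ⊗ₜ g) = (a • n) ⊗ₜ (h * g) := rfl

@[simp] lemma hopfSMul_add_left (z z' : A ⊗[k] H) (w : N ⊗[k] H) :
    hopfSMul k H A N (z + z') w = hopfSMul k H A N z w + hopfSMul k H A N z' w := by
  simp only [hopfSMul, add_tmul, map_add]

@[simp] lemma hopfSMul_add_right (z : A ⊗[k] H) (w w' : N ⊗[k] H) :
    hopfSMul k H A N z (w + w') = hopfSMul k H A N z w + hopfSMul k H A N z w' := by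
  simp only [hopfSMul, tmul_add, map_add]

@[simp] lemma hopfSMul_zero_left (w : N ⊗[k] H) : hopfSMul k H A N 0 w = 0 := by
  simp only [hopfSMul, zero_tmul, map_zero]

@[simp] lemma hopfSMul_zero_right (z : A ⊗[k] H) : hopfSMul k H A N z 0 = 0 := by
  simp only [hopfSMul, tmul_zero, map_zero]

lemma hopfSMul_hopfSMul (z z' : A ⊗[k] H) (w : N ⊗[k] H) :
    hopfSMul k H A N z (hopfSMul k H A N z' w) = hopfSMul k H A N (z * z') w := by
  induction z using TensorProduct.induction_on with
  | zero => simp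
  | add z₁ z₂ h₁ h₂ => simp [h₁, h₂, add_mul]
  | tmul a h =>
    induction z' using TensorProduct.induction_on with
    | zero => simp
    | add z₁ z₂ h₁ h₂ => simp [h₁, h₂, mul_add]
    | tmul a' h' =>
      induction w using TensorProduct.induction_on with
      | zero => simp
      | add w₁ w₂ h₁ h₂ => simp [h₁, h₂]
      | tmul n g => simp [mul_smul, mul_assoc]

lemma hopfSMul_eq_mul (z w : A ⊗[k] H) : hopfSMul k H A A z w = z * w := by
  induction z using TensorProduct.induction_on with
  | zero => simp
  | add z₁ z₂ h₁ h₂ => simp [h₁, h₂, add_mul]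
  | tmul a h =>
    induction w using TensorProduct.induction_on with
    | zero => simp
    | add w₁ w₂ h₁ h₂ => simp [h₁, h₂, mul_add]
    | tmul a' h' => simp

lemma hopfSMul_tmul_right (z : A ⊗[k] H) (n : N) (g : H) :
    hopfSMul k H A N z (n ⊗ₜ g) =
      rTensor H ((LinearMap.toSpanSingleton A N n).restrictScalars k) (z * (1 ⊗ₜ g)) := by
  induction z using TensorProduct.induction_on with
  | zero => simp
  | add z₁ z₂ h₁ h₂ => simp [h₁, h₂, add_mul]
  | tmul a h => simp

variable (ρ : A →ₐ[k] A ⊗[k] H) (φ : H →ₗ[k] A) (ρN : N →ₗ[k] N ⊗[k] H)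

noncomputable def integralContraction : N ⊗[k] H →ₗ[k] N :=
  actionMap k A N ∘ₗ (TensorProduct.comm k N A).toLinearMap ∘ₗ lTensor N (φ ∘ₗ antipode k)

@[simp] lemma integralContraction_tmul (n : N) (h : H) :
    integralContraction φ (n ⊗ₜ h) = φ (antipode k h) • n := rfl

lemma integralContraction_hopfSMul_tmul_one (a : A) (w : N ⊗[k] H) :
    integralContraction φ (hopfSMul k H A N (a ⊗ₜ 1) w) = a • integralContraction φ w := by
  induction w using TensorProduct.induction_on with
  | zero => simp
  | add w₁ w₂ h₁ h₂ => simp [h₁, h₂]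
  | tmul n h => simp [smul_smul, mul_comm]

lemma integralContraction_rTensor_toSpanSingleton (m : N) (z : A ⊗[k] H) :
    integralContraction φ (rTensor H ((LinearMap.toSpanSingleton A N m).restrictScalars k) z) =
      integralContraction φ z • m := by
  induction z using TensorProduct.induction_on with
  | zero => simp
  | add z₁ z₂ h₁ h₂ => simp [h₁, h₂, add_smul]
  | tmul a h => simp [smul_smul]

noncomputable def coinvProj : N →ₗ[k] N := integralContraction φ ∘ₗ ρN

lemma coinvProj_smul_of_mem_coinvariants
    (hcompat : ∀ (a : A) (n : N), ρN (a • n) = hopfSMul k H A N (ρ a) (ρN n))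
    {a : A} (ha : a ∈ coinvariants k H A ρ) (n : N) :
    coinvProj φ ρN (a • n) = a • coinvProj φ ρN n := by
  simp only [coinvProj, LinearMap.comp_apply, hcompat, show ρ a = a ⊗ₜ 1 from ha,
    integralContraction_hopfSMul_tmul_one]

lemma coinvProj_smul_of_coaction_eq
    (hcompat : ∀ (a : A) (n : N), ρN (a • n) = hopfSMul k H A N (ρ a) (ρN n))
    {m : N} (hm : ρN m = m ⊗ₜ 1) (a : A) :
    coinvProj φ ρN (a • m) = coinvProj φ ρ.toLinearMap a • m := by
  simp only [coinvProj, LinearMap.comp_apply, hcompat, hm, hopfSMul_tmul_right,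
    ← Algebra.TensorProduct.one_def, mul_one, integralContraction_rTensor_toSpanSingleton,
    AlgHom.toLinearMap_apply]

lemma coaction_coinvProj (hφ : ρ.toLinearMap ∘ₗ φ = rTensor H φ ∘ₗ comul)
    (hcompat : ∀ (a : A) (n : N), ρN (a • n) = hopfSMul k H A N (ρ a) (ρN n))
    (hNcoassoc : (TensorProduct.assoc k N H H).toLinearMap ∘ₗ rTensor H ρN ∘ₗ ρN =
      lTensor N comul ∘ₗ ρN)
    (n : N) :
    ρN (coinvProj φ ρN n) = coinvProj φ ρN n ⊗ₜ 1 := by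
  let W : N ⊗[k] (H ⊗[k] H) →ₗ[k] N ⊗[k] H :=
    rTensor H (actionMap k A N ∘ₗ (TensorProduct.comm k N A).toLinearMap ∘ₗ lTensor N φ) ∘ₗ
      (TensorProduct.assoc k N H H).symm.toLinearMap
  let γ : H ⊗[k] H →ₗ[k] H ⊗[k] H :=
    mul' k (H ⊗[k] H) ∘ₗ map (TensorProduct.mk k H H 1) (comul ∘ₗ antipode k)
  have hW (u : H ⊗[k] H) (m : N) (g : H) :
      hopfSMul k H A N (rTensor H φ u) (m ⊗ₜ g) = W (m ⊗ₜ (1 ⊗ₜ g * u)) := by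
    induction u using TensorProduct.induction_on with
    | zero => simp
    | add u₁ u₂ h₁ h₂ => simp only [map_add, hopfSMul_add_left, h₁, h₂, mul_add, tmul_add]
    | tmul p q => simp [W, mul_comm]
  have hρN : ρN ∘ₗ integralContraction φ =
      W ∘ₗ lTensor N γ ∘ₗ (TensorProduct.assoc k N H H).toLinearMap ∘ₗ rTensor H ρN := by
    ext m h
    have hφh : ρ (φ (antipode k h)) = rTensor H φ (comul (antipode k h)) := congr($hφ _)
    simp only [AlgebraTensorModule.curry_apply, curry_apply, LinearMap.coe_restrictScalars,
      LinearMap.comp_apply, integralContraction_tmul, hcompat, hφh, rTensor_tmul]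
    induction ρN m using TensorProduct.induction_on with
    | zero => simp
    | add v₁ v₂ h₁ h₂ => simp only [hopfSMul_add_right, h₁, h₂, map_add, add_tmul]
    | tmul m' g => rw [hW]; rfl
  have hγ : γ ∘ₗ comul = (TensorProduct.mk k H H).flip 1 ∘ₗ antipode k :=
    congrArg ofConv one_tmul_convMul_comul_antipode
  have hWγ : W ∘ₗ lTensor N ((TensorProduct.mk k H H).flip 1 ∘ₗ antipode k) =
      (TensorProduct.mk k N H).flip 1 ∘ₗ integralContraction φ := by
    ext m h; simp [W]
  calc ρN (coinvProj φ ρN n)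
      = W (lTensor N γ (lTensor N comul (ρN n))) := by
        rw [← LinearMap.comp_apply (lTensor N comul) ρN, ← hNcoassoc]
        exact congr($hρN (ρN n))
    _ = W (lTensor N (γ ∘ₗ comul) (ρN n)) := congrArg W (LinearMap.lTensor_comp_apply ..).symm
    _ = coinvProj φ ρN n ⊗ₜ 1 := by rw [hγ]; exact congr($hWγ (ρN n))

lemma lTensor_mul_antipode_comp_coaction
    (hNcoassoc : (TensorProduct.assoc k N H H).toLinearMap ∘ₗ rTensor H ρN ∘ₗ ρN =
      lTensor N comul ∘ₗ ρN)
    (hNcounit : (TensorProduct.rid k N).toLinearMap ∘ₗ lTensor N counit ∘ₗ ρN = LinearMap.id) :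
    lTensor N (mul' k H ∘ₗ lTensor H (antipode k)) ∘ₗ
        (TensorProduct.assoc k N H H).toLinearMap ∘ₗ rTensor H ρN ∘ₗ ρN =
      (TensorProduct.mk k N H).flip 1 := by
  have hε : lTensor N counit ∘ₗ ρN = (TensorProduct.rid k N).symm.toLinearMap := by
    simpa [← LinearMap.comp_assoc] using
      congrArg ((TensorProduct.rid k N).symm.toLinearMap ∘ₗ ·) hNcounit
  rw [hNcoassoc, ← LinearMap.comp_assoc, ← lTensor_comp, LinearMap.comp_assoc,
    mul_antipode_lTensor_comul, lTensor_comp, LinearMap.comp_assoc, hε]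
  ext n; simp

lemma canonicalMap_tmul (x y : A) : canonicalMap k H A ρ (x ⊗ₜ y) = (x ⊗ₜ 1) * ρ y := rfl

lemma coaction_smul_self (a a' : A) :
    ρ.toLinearMap (a • a') = hopfSMul k H A A (ρ a) (ρ.toLinearMap a') := by
  simp [hopfSMul_eq_mul]

section Inverse

variable (hφ : ρ.toLinearMap ∘ₗ φ = rTensor H φ ∘ₗ comul)
  (hcompat : ∀ (a : A) (n : N), ρN (a • n) = hopfSMul k H A N (ρ a) (ρN n))
  (hNcoassoc : (TensorProduct.assoc k N H H).toLinearMap ∘ₗ rTensor H ρN ∘ₗ ρN =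
    lTensor N comul ∘ₗ ρN)

noncomputable def hopfEval :
    hopfCoinvariants k H A N ρ ρN hcompat ⊗[coinvariants k H A ρ] A →ₗ[coinvariants k H A ρ] N :=
  (liftBaseChange A (hopfCoinvariants k H A N ρ ρN hcompat).subtype).restrictScalars _ ∘ₗ
    (TensorProduct.comm _ _ A).toLinearMap

@[simp] lemma hopfEval_tmul (m : hopfCoinvariants k H A N ρ ρN hcompat) (a : A) :
    hopfEval ρ ρN hcompat (m ⊗ₜ a) = a • (m : N) := rfl

noncomputable def toHopfCoinvariants :
    N →ₗ[coinvariants k H A ρ] hopfCoinvariants k H A N ρ ρN hcompat where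
  toFun n := ⟨coinvProj φ ρN n, coaction_coinvProj ρ φ ρN hφ hcompat hNcoassoc n⟩
  map_add' n n' := Subtype.ext (map_add _ n n')
  map_smul' b n := Subtype.ext (coinvProj_smul_of_mem_coinvariants ρ φ ρN hcompat b.2 n)

@[simp] lemma coe_toHopfCoinvariants (n : N) :
    (toHopfCoinvariants ρ φ ρN hφ hcompat hNcoassoc n : N) = coinvProj φ ρN n := rfl

noncomputable def coinvProjSwap :
    N ⊗[k] (A ⊗[coinvariants k H A ρ] A) →ₗ[k]
      hopfCoinvariants k H A N ρ ρN hcompat ⊗[coinvariants k H A ρ] A :=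
  ((TensorProduct.comm _ A _).toLinearMap ∘ₗ
      lTensor A (toHopfCoinvariants ρ φ ρN hφ hcompat hNcoassoc ∘ₗ
        (liftBaseChange A LinearMap.id).restrictScalars _) ∘ₗ
      (AlgebraTensorModule.assoc k _ _ A A N).toLinearMap).restrictScalars k ∘ₗ
    (TensorProduct.comm k N _).toLinearMap

@[simp] lemma coinvProjSwap_tmul_tmul (n : N) (x y : A) :
    coinvProjSwap ρ φ ρN hφ hcompat hNcoassoc (n ⊗ₜ (x ⊗ₜ y)) =
      toHopfCoinvariants ρ φ ρN hφ hcompat hNcoassoc (y • n) ⊗ₜ x := rfl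

lemma hopfEval_coinvProjSwap_tmul (n : N) (t : A ⊗[coinvariants k H A ρ] A) :
    hopfEval ρ ρN hcompat (coinvProjSwap ρ φ ρN hφ hcompat hNcoassoc (n ⊗ₜ t)) =
      integralContraction φ (hopfSMul k H A N (canonicalMap k H A ρ t) (ρN n)) := by
  induction t using TensorProduct.induction_on with
  | zero => simp
  | add t₁ t₂ h₁ h₂ => simp only [tmul_add, map_add, h₁, h₂, hopfSMul_add_left]
  | tmul x y =>
    simp [canonicalMap_tmul, ← hopfSMul_hopfSMul, integralContraction_hopfSMul_tmul_one,
      coinvProj, hcompat]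

noncomputable def hopfEvalInv (s : H →ₗ[k] A ⊗[coinvariants k H A ρ] A) :
    N →ₗ[k] hopfCoinvariants k H A N ρ ρN hcompat ⊗[coinvariants k H A ρ] A :=
  coinvProjSwap ρ φ ρN hφ hcompat hNcoassoc ∘ₗ lTensor N (s ∘ₗ antipode k) ∘ₗ ρN

lemma hopfEval_hopfEvalInv (s : H →ₗ[k] A ⊗[coinvariants k H A ρ] A)
    (hs : ∀ h, canonicalMap k H A ρ (s h) = 1 ⊗ₜ h)
    (hNcounit : (TensorProduct.rid k N).toLinearMap ∘ₗ lTensor N counit ∘ₗ ρN = LinearMap.id)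
    (hφ1 : φ 1 = 1) (n : N) :
    hopfEval ρ ρN hcompat (hopfEvalInv ρ φ ρN hφ hcompat hNcoassoc s n) = n := by
  have key : (hopfEval ρ ρN hcompat).restrictScalars k ∘ₗ
      coinvProjSwap ρ φ ρN hφ hcompat hNcoassoc ∘ₗ lTensor N (s ∘ₗ antipode k) =
      integralContraction φ ∘ₗ lTensor N (mul' k H ∘ₗ lTensor H (antipode k)) ∘ₗ
        (TensorProduct.assoc k N H H).toLinearMap ∘ₗ rTensor H ρN := by
    ext m h
    simp only [AlgebraTensorModule.curry_apply, curry_apply, LinearMap.coe_restrictScalars,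
      LinearMap.comp_apply, lTensor_tmul, rTensor_tmul, hopfEval_coinvProjSwap_tmul, hs]
    congr 1
    induction ρN m using TensorProduct.induction_on with
    | zero => simp
    | add v₁ v₂ h₁ h₂ => simp only [hopfSMul_add_right, h₁, h₂, map_add, add_tmul]
    | tmul m' g => simp [mul_comm]
  calc hopfEval ρ ρN hcompat (hopfEvalInv ρ φ ρN hφ hcompat hNcoassoc s n)
      = integralContraction φ ((lTensor N (mul' k H ∘ₗ lTensor H (antipode k)) ∘ₗ
          (TensorProduct.assoc k N H H).toLinearMap ∘ₗ rTensor H ρN ∘ₗ ρN) n) :=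
        congr($key (ρN n))
    _ = n := by
        rw [lTensor_mul_antipode_comp_coaction ρN hNcoassoc hNcounit]
        simp [antipode_one, hφ1]

lemma coinvProjSwap_rTensor_toSpanSingleton
    (hcoassoc : (TensorProduct.assoc k A H H).toLinearMap ∘ₗ rTensor H ρ.toLinearMap ∘ₗ
      ρ.toLinearMap = lTensor A comul ∘ₗ ρ.toLinearMap)
    (m : hopfCoinvariants k H A N ρ ρN hcompat) (w : A ⊗[k] (A ⊗[coinvariants k H A ρ] A)) :
    coinvProjSwap ρ φ ρN hφ hcompat hNcoassoc
        (rTensor _ ((LinearMap.toSpanSingleton A N m).restrictScalars k) w) =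
      m ⊗ₜ hopfEval ρ ρ.toLinearMap (coaction_smul_self ρ)
        (coinvProjSwap ρ φ ρ.toLinearMap hφ (coaction_smul_self ρ) hcoassoc w) := by
  induction w using TensorProduct.induction_on with
  | zero => simp
  | add w₁ w₂ h₁ h₂ => simp only [map_add, h₁, h₂, tmul_add]
  | tmul a t =>
    induction t using TensorProduct.induction_on with
    | zero => simp
    | add t₁ t₂ h₁ h₂ => simp only [tmul_add, map_add, h₁, h₂]
    | tmul x y =>
      let b : coinvariants k H A ρ := ⟨coinvProj φ ρ.toLinearMap (y * a),
        coaction_coinvProj ρ φ ρ.toLinearMap hφ (coaction_smul_self ρ) hcoassoc (y * a)⟩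
      have hb : toHopfCoinvariants ρ φ ρN hφ hcompat hNcoassoc ((y * a) • (m : N)) = b • m :=
        Subtype.ext (coinvProj_smul_of_coaction_eq ρ φ ρN hcompat m.2 _)
      simp only [rTensor_tmul, LinearMap.coe_restrictScalars, toSpanSingleton_apply,
        coinvProjSwap_tmul_tmul, smul_smul, hb, smul_tmul, hopfEval_tmul]
      congr 1
      exact mul_comm _ _

lemma hopfEvalInv_hopfEval
    (hcoassoc : (TensorProduct.assoc k A H H).toLinearMap ∘ₗ rTensor H ρ.toLinearMap ∘ₗ
      ρ.toLinearMap = lTensor A comul ∘ₗ ρ.toLinearMap)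
    (hcounit : (TensorProduct.rid k A).toLinearMap ∘ₗ lTensor A counit ∘ₗ ρ.toLinearMap =
      LinearMap.id)
    (s : H →ₗ[k] A ⊗[coinvariants k H A ρ] A) (hs : ∀ h, canonicalMap k H A ρ (s h) = 1 ⊗ₜ h)
    (hφ1 : φ 1 = 1) (z : hopfCoinvariants k H A N ρ ρN hcompat ⊗[coinvariants k H A ρ] A) :
    hopfEvalInv ρ φ ρN hφ hcompat hNcoassoc s (hopfEval ρ ρN hcompat z) = z := by
  induction z using TensorProduct.induction_on with
  | zero => simp
  | add z₁ z₂ h₁ h₂ => simp only [map_add, h₁, h₂]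
  | tmul m a =>
    have hm : ρN m = (m : N) ⊗ₜ 1 := m.2
    have hswap : lTensor N (s ∘ₗ antipode k) ∘ₗ
        rTensor H ((LinearMap.toSpanSingleton A N m).restrictScalars k) =
        rTensor _ ((LinearMap.toSpanSingleton A N m).restrictScalars k) ∘ₗ
          lTensor A (s ∘ₗ antipode k) := by
      rw [lTensor_comp_rTensor, rTensor_comp_lTensor]
    simp only [hopfEval_tmul, hopfEvalInv, LinearMap.comp_apply]
    rw [hcompat, hm, hopfSMul_tmul_right, ← Algebra.TensorProduct.one_def, mul_one,
      ← LinearMap.comp_apply (lTensor N _), hswap, LinearMap.comp_apply,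
      coinvProjSwap_rTensor_toSpanSingleton ρ φ ρN hφ hcompat hNcoassoc hcoassoc]
    exact congrArg (m ⊗ₜ ·) (hopfEval_hopfEvalInv ρ φ ρ.toLinearMap hφ (coaction_smul_self ρ)
      hcoassoc s hs hcounit hφ1 a)

end Inverse

end HopfModule

/-- **Schneider's theorem (one direction).**  Let `H` be a commutative Hopf algebra over a
field `k`, `A` a right `H`-comodule algebra with coinvariants `B = A^{coH}`, admitting a total
integral `φ : H → A`, and such that the canonical map `can : A ⊗_B A → A ⊗ H` is surjective.
Then for every `(A,H)`-Hopf module `N` the evaluation map `N^{coH} ⊗_B A → N`,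
`n ⊗ a ↦ n·a`, is an isomorphism. -/
theorem stmt12 (k H A N : Type*) [Field k] [CommRing H] [HopfAlgebra k H]
    [CommRing A] [Algebra k A]
    [AddCommGroup N] [Module k N] [Module A N] [IsScalarTower k A N]
    (ρ : A →ₐ[k] A ⊗[k] H)
    (hcoassoc : (TensorProduct.assoc k A H H).toLinearMap ∘ₗ
        (LinearMap.rTensor H ρ.toLinearMap) ∘ₗ ρ.toLinearMap
      = (LinearMap.lTensor A (Coalgebra.comul (R := k))) ∘ₗ ρ.toLinearMap)
    (hcounit : (TensorProduct.rid k A).toLinearMap ∘ₗ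
        (LinearMap.lTensor A (Coalgebra.counit (R := k))) ∘ₗ ρ.toLinearMap = LinearMap.id)
    (ρN : N →ₗ[k] N ⊗[k] H)
    (hNcoassoc : (TensorProduct.assoc k N H H).toLinearMap ∘ₗ
        (LinearMap.rTensor H ρN) ∘ₗ ρN
      = (LinearMap.lTensor N (Coalgebra.comul (R := k))) ∘ₗ ρN)
    (hNcounit : (TensorProduct.rid k N).toLinearMap ∘ₗ
        (LinearMap.lTensor N (Coalgebra.counit (R := k))) ∘ₗ ρN = LinearMap.id)
    (hcompat : ∀ (a : A) (n : N), ρN (a • n) = hopfSMul k H A N (ρ a) (ρN n))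
    (φ : H →ₗ[k] A) (hφ1 : φ 1 = 1)
    (hφ : ρ.toLinearMap ∘ₗ φ = (LinearMap.rTensor H φ) ∘ₗ (Coalgebra.comul (R := k)))
    (hcan : Function.Surjective (canonicalMap k H A ρ)) :
    ∃ e : ↥(hopfCoinvariants k H A N ρ ρN hcompat) ⊗[↥(coinvariants k H A ρ)] A
        →ₗ[↥(coinvariants k H A ρ)] N,
      (∀ (n : ↥(hopfCoinvariants k H A N ρ ρN hcompat)) (a : A),
        e (n ⊗ₜ a) = a • (n : N)) ∧
      Function.Bijective e := by
  obtain ⟨g, hg⟩ := ((canonicalMap k H A ρ).toLinearMap.restrictScalars k)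
    |>.exists_rightInverse_of_surjective (LinearMap.range_eq_top.mpr hcan)
  let s := g ∘ₗ TensorProduct.mk k A H 1
  have hs (h : H) : canonicalMap k H A ρ (s h) = 1 ⊗ₜ h := congr($hg (1 ⊗ₜ h))
  refine ⟨hopfEval ρ ρN hcompat, hopfEval_tmul ρ ρN hcompat,
    Function.bijective_iff_has_inverse.mpr ⟨hopfEvalInv ρ φ ρN hφ hcompat hNcoassoc s, ?_, ?_⟩⟩
  · exact hopfEvalInv_hopfEval ρ φ ρN hφ hcompat hNcoassoc hcoassoc hcounit s hs hφ1
  · exact hopfEval_hopfEvalInv ρ φ ρN hφ hcompat hNcoassoc s hs hNcounit hφ1
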